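/- Let G be the group of order 125 with underlying set (ZMod 5 × ZMod 5) × ZMod 5 and multiplication ((a,b),c) * ((a',b'),c') = ((a + a', b + b' + c * a'), c + c') (the semidirect product (ℤ/5 × ℤ/5) ⋊ ℤ/5 in which the generator 1 of ℤ/5 acts by the automorphism sending (0,1) to (0,1) and (1,0) to (1,1)). Let X = Option G, writing ∞ for none, with G acting on X by left translation (g • some x = some (g * x), g • ∞ = ∞). Let ℬ be the family of all left translates of the five base blocks B1 = {((0,0),0),((0,0),1),((1,0),0),((1,1),2),((2,1),1),((2,2),2)}, B2 = {((0,0),0),((0,0),2),((2,1),3),((2,4),1),((3,2),0),((4,2),3)}, B3 = {((0,0),0),((0,1),0),((0,2),0),((0,3),0),((0,4),0)} ∪ {∞}, B4 = {((0,0),0),((0,1),3),((2,0),2),((2,3),3),((4,1),2),((4,3),0)}, B5 = {((0,0),0),((0,1),4),((1,1),3),((1,4),2),((2,0),3),((4,4),4)} (group elements embedded in X via some). Then every block of ℬ has exactly 6 elements and every pair of distinct points of X is contained in exactly one block of ℬ; that is, ℬ is a Steiner system S(2,6,126) (a unital of order 5) on X, invariant under the left translation action with the single fixed point ∞. This design is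 the classical unital of order 5. -/
import Mathlib

def gmul4 (p q : (ZMod 5 × ZMod 5) × ZMod 5) : (ZMod 5 × ZMod 5) × ZMod 5 :=
  ((p.1.1 + q.1.1, p.1.2 + q.1.2 + p.2 * q.1.1), p.2 + q.2)

def trG4 (g : (ZMod 5 × ZMod 5) × ZMod 5) :
    Option ((ZMod 5 × ZMod 5) × ZMod 5) → Option ((ZMod 5 × ZMod 5) × ZMod 5) :=
  Option.map (gmul4 g)

def baseBlocks4 : List (Finset (Option ((ZMod 5 × ZMod 5) × ZMod 5))) :=
  [ {some ((0, 0), 0), some ((0, 0), 1), some ((1, 0), 0), some ((1, 1), 2),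
     some ((2, 1), 1), some ((2, 2), 2)},
    {some ((0, 0), 0), some ((0, 0), 2), some ((2, 1), 3), some ((2, 4), 1),
     some ((3, 2), 0), some ((4, 2), 3)},
    {some ((0, 0), 0), some ((0, 1), 0), some ((0, 2), 0), some ((0, 3), 0),
     some ((0, 4), 0), none},
    {some ((0, 0), 0), some ((0, 1), 3), some ((2, 0), 2), some ((2, 3), 3),
     some ((4, 1), 2), some ((4, 3), 0)},
    {some ((0, 0), 0), some ((0, 1), 4), some ((1, 1), 3), some ((1, 4), 2),
     some ((2, 0), 3), some ((4, 4), 4)} ]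

def blocks4 : Set (Finset (Option ((ZMod 5 × ZMod 5) × ZMod 5))) :=
  { B | ∃ g : (ZMod 5 × ZMod 5) × ZMod 5, ∃ B0 ∈ baseBlocks4, B = B0.image (trG4 g) }

abbrev G5 := (ZMod 5 × ZMod 5) × ZMod 5

def e5 : G5 := ((0,0),0)

def ginv (p : G5) : G5 := ((-p.1.1, -p.1.2 + p.2 * p.1.1), -p.2)

def xinv : Option G5 → G5
  | none => e5
  | some x => ginv x

lemma gmul4_assoc (a b c : G5) : gmul4 (gmul4 a b) c = gmul4 a (gmul4 b c) := by
  simp only [gmul4, Prod.mk.injEq]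
  exact ⟨⟨by ring, by ring⟩, by ring⟩

lemma gmul4_e_left (p : G5) : gmul4 e5 p = p := by
  simp [gmul4, e5]

lemma gmul4_e_right (p : G5) : gmul4 p e5 = p := by
  simp [gmul4, e5]

lemma ginv_mul (p : G5) : gmul4 (ginv p) p = e5 := by
  simp only [gmul4, ginv, e5, Prod.mk.injEq]
  exact ⟨⟨by ring, by ring⟩, by ring⟩

lemma mul_ginv (p : G5) : gmul4 p (ginv p) = e5 := by
  simp only [gmul4, ginv, e5, Prod.mk.injEq]
  exact ⟨⟨by ring, by ring⟩, by ring⟩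

lemma trG4_comp (g h : G5) (x : Option G5) :
    trG4 g (trG4 h x) = trG4 (gmul4 g h) x := by
  cases x with
  | none => rfl
  | some y => simp [trG4, gmul4_assoc]

lemma trG4_id (x : Option G5) : trG4 e5 x = x := by
  cases x with
  | none => rfl
  | some y => simp [trG4, gmul4_e_left]

lemma image_comp (g h : G5) (B : Finset (Option G5)) :
    (B.image (trG4 h)).image (trG4 g) = B.image (trG4 (gmul4 g h)) := by
  rw [Finset.image_image]
  exact Finset.image_congr (fun x _ => trG4_comp g h x)

lemma image_id (B : Finset (Option G5)) : B.image (trG4 e5) = B := by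
  rw [show trG4 e5 = id from funext trG4_id, Finset.image_id]

lemma trG4_inj (g : G5) : Function.Injective (trG4 g) := by
  intro a b h
  have := congrArg (trG4 (ginv g)) h
  rwa [trG4_comp, trG4_comp, ginv_mul, trG4_id, trG4_id] at this

lemma blocks4_closed (g : G5) (B : Finset (Option G5)) (hB : B ∈ blocks4) :
    B.image (trG4 g) ∈ blocks4 := by
  obtain ⟨h, B0, hB0, rfl⟩ := hB
  exact ⟨gmul4 g h, B0, hB0, image_comp g h B0⟩

lemma transport (g : G5) (p q : Option G5)
    (h : ∃! B, B ∈ blocks4 ∧ p ∈ B ∧ q ∈ B) :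
    ∃! B, B ∈ blocks4 ∧ trG4 g p ∈ B ∧ trG4 g q ∈ B := by
  obtain ⟨B, ⟨hB, hp, hq⟩, huniq⟩ := h
  refine ⟨B.image (trG4 g), ⟨blocks4_closed g B hB,
    Finset.mem_image_of_mem _ hp, Finset.mem_image_of_mem _ hq⟩, ?_⟩
  rintro B' ⟨hB', hp', hq'⟩
  have hpB : p ∈ B'.image (trG4 (ginv g)) := by
    have := Finset.mem_image_of_mem (trG4 (ginv g)) hp'
    rwa [trG4_comp, ginv_mul, trG4_id] at this
  have hqB : q ∈ B'.image (trG4 (ginv g)) := by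
    have := Finset.mem_image_of_mem (trG4 (ginv g)) hq'
    rwa [trG4_comp, ginv_mul, trG4_id] at this
  have h1 : B'.image (trG4 (ginv g)) = B :=
    huniq _ ⟨blocks4_closed _ _ hB', hpB, hqB⟩
  calc B' = (B'.image (trG4 (ginv g))).image (trG4 g) := by
        rw [image_comp, mul_ginv, image_id]
    _ = B.image (trG4 g) := by rw [h1]

set_option maxRecDepth 1000000 in
set_option maxHeartbeats 8000000 in
lemma P1 : ∀ q : G5, ∃ B0 ∈ baseBlocks4, ∃ b ∈ B0,
    some e5 ∈ B0.image (trG4 (xinv b)) ∧ some q ∈ B0.image (trG4 (xinv b)) := by decide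

set_option maxRecDepth 1000000 in
set_option maxHeartbeats 8000000 in
lemma P1none : ∃ B0 ∈ baseBlocks4, ∃ b ∈ B0,
    some e5 ∈ B0.image (trG4 (xinv b)) ∧ none ∈ B0.image (trG4 (xinv b)) := by decide

set_option maxRecDepth 1000000 in
set_option maxHeartbeats 8000000 in
lemma P2 : ∀ B0 ∈ baseBlocks4, ∀ B0' ∈ baseBlocks4, ∀ b ∈ B0, ∀ b' ∈ B0',
    B0.image (trG4 (xinv b)) = B0'.image (trG4 (xinv b')) ∨
    (B0.image (trG4 (xinv b)) ∩ B0'.image (trG4 (xinv b'))).card ≤ 1 := by decide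

lemma baseCard : ∀ B0 ∈ baseBlocks4, B0.card = 6 := by
  intro B0 h; fin_cases h <;> rfl

lemma char (g : G5) (B0 : Finset (Option G5))
    (h : some e5 ∈ B0.image (trG4 g)) : ∃ b ∈ B0, xinv b = g := by
  obtain ⟨b, hb, hbe⟩ := Finset.mem_image.1 h
  cases b with
  | none => simp [trG4] at hbe
  | some x =>
    refine ⟨some x, hb, ?_⟩
    have hx : gmul4 g x = e5 := by simpa [trG4] using hbe
    have hg : g = gmul4 (gmul4 g x) (ginv x) := by
      rw [gmul4_assoc, mul_ginv, gmul4_e_right]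
    rw [hx, gmul4_e_left] at hg
    simp [xinv, hg]

lemma core (q : Option G5) (hq : q ≠ some e5) :
    ∃! B, B ∈ blocks4 ∧ some e5 ∈ B ∧ q ∈ B := by
  have hP1 : ∃ B0 ∈ baseBlocks4, ∃ b ∈ B0,
      some e5 ∈ B0.image (trG4 (xinv b)) ∧ q ∈ B0.image (trG4 (xinv b)) := by
    cases q with
    | none => exact P1none
    | some y => exact P1 y
  obtain ⟨B0, hB0, b, hb, he, hqm⟩ := hP1
  refine ⟨B0.image (trG4 (xinv b)), ⟨⟨xinv b, B0, hB0, rfl⟩, he, hqm⟩, ?_⟩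
  rintro B' ⟨⟨g', B0', hB0', rfl⟩, he', hq'⟩
  obtain ⟨b', hb', hg'⟩ := char g' B0' he'
  subst hg'
  rcases P2 B0' hB0' B0 hB0 b' hb' b hb with heq | hcard
  · exact heq
  · exfalso
    have hsub : ({some e5, q} : Finset (Option G5)) ⊆
        B0'.image (trG4 (xinv b')) ∩ B0.image (trG4 (xinv b)) := by
      intro x hx
      rcases Finset.mem_insert.1 hx with rfl | hx
      · exact Finset.mem_inter.2 ⟨he', he⟩
      · rw [Finset.mem_singleton] at hx; subst hx
        exact Finset.mem_inter.2 ⟨hq', hqm⟩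
    have h2 : ({some e5, q} : Finset (Option G5)).card = 2 :=
      Finset.card_pair (fun h => hq h.symm)
    have := Finset.card_le_card hsub
    omega

theorem classical_unital_order5 :
    (∀ B ∈ blocks4, B.card = 6) ∧
    (∀ p q : Option ((ZMod 5 × ZMod 5) × ZMod 5), p ≠ q →
      ∃! B, B ∈ blocks4 ∧ p ∈ B ∧ q ∈ B) ∧
    (∀ g : (ZMod 5 × ZMod 5) × ZMod 5, ∀ B ∈ blocks4, B.image (trG4 g) ∈ blocks4) ∧
    (∀ g : (ZMod 5 × ZMod 5) × ZMod 5, trG4 g none = none) ∧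
    (∀ g : (ZMod 5 × ZMod 5) × ZMod 5, g ≠ ((0, 0), 0) →
      ∀ x : Option ((ZMod 5 × ZMod 5) × ZMod 5), trG4 g x = x → x = none) := by
  refine ⟨?_, ?_, ?_, ?_, ?_⟩
  · rintro B ⟨g, B0, hB0, rfl⟩
    rw [Finset.card_image_of_injective _ (trG4_inj g)]
    exact baseCard B0 hB0
  · intro p q hpq
    cases p with
    | none =>
      cases q with
      | none => exact absurd rfl hpq
      | some y =>
        have h := core none (by simp)
        have ht := transport y _ _ h
        rw [show trG4 y (some e5) = some y by simp [trG4, gmul4_e_right]] at ht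
        obtain ⟨B, ⟨h1, h2, h3⟩, hu⟩ := ht
        exact ⟨B, ⟨h1, h3, h2⟩, fun B' ⟨a, b, c⟩ => hu B' ⟨a, c, b⟩⟩
    | some x =>
      have hq0 : trG4 (ginv x) q ≠ some e5 := by
        intro h
        have := congrArg (trG4 x) h
        rw [trG4_comp, mul_ginv, trG4_id] at this
        simp only [trG4, Option.map_some, gmul4_e_right] at this
        exact hpq this.symm
      have h := core _ hq0
      have ht := transport x _ _ h
      rw [show trG4 x (some e5) = some x by simp [trG4, gmul4_e_right],
        trG4_comp, mul_ginv, trG4_id] at ht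
      exact ht
  · exact fun g B hB => blocks4_closed g B hB
  · intro g; rfl
  · intro g hg x hx
    cases x with
    | none => rfl
    | some y =>
      exfalso
      have h : gmul4 g y = y := Option.some.inj hx
      have hgE : g = gmul4 (gmul4 g y) (ginv y) := by
        rw [gmul4_assoc, mul_ginv, gmul4_e_right]
      rw [h, mul_ginv] at hgE
      exact hg hgE
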